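/- The Hermitian curve x^{q+1} + y^{q+1} + z^{q+1} = 0 has exactly 1 + q^2 + 2q·g rational points over F_{q^2}, where g = q(q−1)/2 is its genus; i.e., its number of F_{q^2}-points equals q^3 + 1. -/

import Mathlib

/-!
Write `N x = x ^ (q + 1)` and `F = {t | t ^ q = t}`; since `x ↦ x ^ q` is a field automorphism
of order two, `N` takes values in `F`, and on the cyclic group `Kˣ` of order `(q - 1)(q + 1)` the
map `N` has kernel of order `q + 1` and image the `(q - 1)`-th roots of unity. So the fibre of `N`
over `t ∈ F` has `q + 1` points, or one point if `t = 0`. Adding one more variable to the form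
`∑ N (v i)` then gives the recursion `Z (n + 1) = (q + 1) q ^ (2n) - q Z n` for the number of
zeros in `K ^ n`, whence `Z 3 = q ^ 5 - q ^ 3 + q ^ 2`. The nonzero zeros are the curve's points
times `Kˣ`, so there are `(Z 3 - 1) / (q ^ 2 - 1) = q ^ 3 + 1` of them.
-/

open Projectivization
open scoped LinearAlgebra.Projectivization

namespace Projectivization

variable {k V : Type*} [DivisionRing k] [AddCommGroup V] [Module k V]

theorem card_nonzero_subtype_eq_card_subtype_rep_mul (C : V → Prop)
    (hC : ∀ (a : kˣ) (v : V), C (a • v) ↔ C v) :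
    Nat.card {v : V // v ≠ 0 ∧ C v} = Nat.card {P : ℙ k V // C P.rep} * Nat.card kˣ := by
  have hrep (w : {v : V // v ≠ 0}) :
      C w ↔ C (nonZeroEquivProjectivizationProdUnits k V w).1.rep := by
    obtain ⟨a, ha⟩ := exists_smul_eq_mk_rep k w.1 w.2
    rw [← hC a, ha]
    rfl
  rw [← Nat.card_prod, Nat.card_congr ((Equiv.subtypeSubtypeEquivSubtypeInter _ C).symm.trans
    (((nonZeroEquivProjectivizationProdUnits k V).subtypeEquiv (q := fun x => C x.1.rep) hrep).trans
      (Equiv.prodSubtypeFstEquivSubtypeProd (p := fun P : ℙ k V => C P.rep))))]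

theorem card_subtype_eq_card_subtype_rep_mul_add_one [Finite V] (C : V → Prop)
    (hC : ∀ (a : kˣ) (v : V), C (a • v) ↔ C v) (h0 : C 0) :
    Nat.card {v : V // C v} = Nat.card {P : ℙ k V // C P.rep} * Nat.card kˣ + 1 := by
  rw [← card_nonzero_subtype_eq_card_subtype_rep_mul C hC]
  calc Nat.card {v // C v} = Nat.card ↥({v | C v} \ {0}) + 1 := by
        rw [Nat.card_coe_set_eq, Set.ncard_sdiff_singleton_add_one (s := {v | C v}) h0]
        rfl
    _ = Nat.card {v : V // v ≠ 0 ∧ C v} + 1 := by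
        rw [Nat.card_congr (Equiv.subtypeEquivRight (q := fun v => v ≠ 0 ∧ C v)
          fun v => by simp [and_comm])]

end Projectivization

section FiniteField

open Finset

variable {K : Type*} [Field K] [Fintype K] {q : ℕ}

theorem exists_ringHom_apply_eq_pow_of_card_eq_sq (hK : Fintype.card K = q ^ 2) :
    ∃ φ : K →+* K, ∀ x, φ x = x ^ q := by
  obtain ⟨p, _, n, hp, hpn⟩ := FiniteField.card' K
  obtain ⟨m, -, rfl⟩ := (Nat.dvd_prime_pow hp).1 (hpn ▸ hK ▸ dvd_pow_self q two_ne_zero)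
  have := Fact.mk hp
  exact ⟨iterateFrobenius K p m, fun _ => rfl⟩

theorem pow_succ_pow_eq_of_card_eq_sq (hK : Fintype.card K = q ^ 2) (x : K) :
    (x ^ (q + 1)) ^ q = x ^ (q + 1) := by
  rw [← pow_mul, show (q + 1) * q = q ^ 2 + q by ring, pow_add, ← hK, FiniteField.pow_card,
    pow_succ']

theorem card_units_eq_mul_of_card_eq_sq (hK : Fintype.card K = q ^ 2) :
    Nat.card Kˣ = (q - 1) * (q + 1) := by
  classical
  rw [Nat.card_eq_fintype_card, Fintype.card_units, hK]
  rcases q with _ | q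
  · rfl
  · simp only [Nat.add_sub_cancel]
    ring_nf
    omega

theorem card_ker_powMonoidHom_units_of_card_eq_sq (hK : Fintype.card K = q ^ 2) :
    Nat.card (powMonoidHom (q + 1) : Kˣ →* Kˣ).ker = q + 1 := by
  rw [IsCyclic.card_powMonoidHom_ker, card_units_eq_mul_of_card_eq_sq hK, Nat.gcd_mul_left_left]

theorem range_powMonoidHom_units_of_card_eq_sq (hK : Fintype.card K = q ^ 2) :
    (powMonoidHom (q + 1) : Kˣ →* Kˣ).range = (powMonoidHom (q - 1)).ker := by
  have hcard := card_units_eq_mul_of_card_eq_sq hK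
  refine Subgroup.eq_of_le_of_card_ge ?_ ?_
  · rintro _ ⟨x, rfl⟩
    rw [MonoidHom.mem_ker, powMonoidHom_apply, powMonoidHom_apply, ← pow_mul, mul_comm, ← hcard,
      pow_card_eq_one']
  · rw [IsCyclic.card_powMonoidHom_ker, IsCyclic.card_powMonoidHom_range, hcard,
      Nat.gcd_mul_left_left, Nat.gcd_mul_right_left, Nat.mul_div_cancel _ q.succ_pos]

theorem card_filter_pow_succ_eq_of_pow_eq_self [DecidableEq K] (hK : Fintype.card K = q ^ 2)
    {t : K} (ht : t ^ q = t) :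
    #{x : K | x ^ (q + 1) = t} = if t = 0 then 1 else q + 1 := by
  split_ifs with h0
  · subst h0
    simp [pow_eq_zero_iff, filter_eq']
  let u := Units.mk0 t h0
  have hu : u ∈ (powMonoidHom (q + 1) : Kˣ →* Kˣ).range := by
    rw [range_powMonoidHom_units_of_card_eq_sq hK, MonoidHom.mem_ker, powMonoidHom_apply,
      Units.ext_iff]
    rcases q with _ | q
    · simp
    · simpa [u, pow_succ, h0] using ht
  have hval : #{x : K | x ^ (q + 1) = t} = #{g : Kˣ | g ^ (q + 1) = u} := by
    rw [← card_map ⟨Units.val, Units.val_injective⟩]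
    congr 1
    ext x
    simp only [mem_filter, mem_univ, true_and, mem_map, Function.Embedding.coeFn_mk, u,
      Units.ext_iff, Units.val_pow_eq_pow_val, Units.val_mk0]
    constructor
    · rintro hx
      have hx0 : x ≠ 0 := by rintro rfl; exact h0 (by simp [← hx])
      exact ⟨Units.mk0 x hx0, by simpa using hx, rfl⟩
    · rintro ⟨g, hg, rfl⟩
      exact hg
  have hfib := MonoidHom.card_fiber_eq_of_mem_range (powMonoidHom (q + 1)) hu ⟨1, one_pow _⟩
  simp only [powMonoidHom_apply] at hfib
  rw [hval, hfib, ← Fintype.card_subtype, ← Nat.card_eq_fintype_card]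
  exact card_ker_powMonoidHom_units_of_card_eq_sq hK

theorem card_filter_pow_succ_eq_apply [DecidableEq K] (hK : Fintype.card K = q ^ 2)
    {W : Type*} [Fintype W] (f : W → K) (hf : ∀ w, f w ^ q = f w) :
    (#{p : K × W | p.1 ^ (q + 1) = f p.2} : ℤ) =
      (q + 1) * Fintype.card W - q * #{w | f w = 0} := by
  have hfib : #{p : K × W | p.1 ^ (q + 1) = f p.2} = ∑ w, #{x : K | x ^ (q + 1) = f w} := by
    simp only [card_filter]
    exact Fintype.sum_prod_type_right _
  calc (#{p : K × W | p.1 ^ (q + 1) = f p.2} : ℤ)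
      = ∑ w, ((q + 1 : ℤ) - q * if f w = 0 then 1 else 0) := by
        rw [hfib, Nat.cast_sum]
        refine sum_congr rfl fun w _ => ?_
        rw [card_filter_pow_succ_eq_of_pow_eq_self hK (hf w)]
        split_ifs <;> push_cast <;> ring
    _ = (q + 1) * Fintype.card W - q * #{w | f w = 0} := by
        simp only [sum_sub_distrib, ← mul_sum, sum_const, card_univ, card_filter]
        push_cast
        ring

theorem card_filter_sum_pow_succ_eq_zero_succ [DecidableEq K] (hK : Fintype.card K = q ^ 2)
    (n : ℕ) :
    (#{v : Fin (n + 1) → K | ∑ i, v i ^ (q + 1) = 0} : ℤ) =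
      (q + 1) * q ^ (2 * n) - q * #{v : Fin n → K | ∑ i, v i ^ (q + 1) = 0} := by
  obtain ⟨φ, hφ⟩ := exists_ringHom_apply_eq_pow_of_card_eq_sq hK
  have hcons : #{v : Fin (n + 1) → K | ∑ i, v i ^ (q + 1) = 0} =
      #{p : K × (Fin n → K) | p.1 ^ (q + 1) = -∑ i, p.2 i ^ (q + 1)} := by
    refine card_equiv (Fin.consEquiv fun _ => K).symm fun v => ?_
    simp [Fin.sum_univ_succ, Fin.consEquiv, Fin.tail, eq_neg_iff_add_eq_zero]
  have hfixed (w : Fin n → K) : (-∑ i, w i ^ (q + 1)) ^ q = -∑ i, w i ^ (q + 1) := by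
    rw [← hφ, map_neg, map_sum]
    simp only [hφ, pow_succ_pow_eq_of_card_eq_sq hK]
  rw [hcons, card_filter_pow_succ_eq_apply hK _ hfixed]
  simp [neg_eq_zero, hK, pow_mul]

theorem card_filter_sum_three_pow_succ_eq_zero [DecidableEq K] (hK : Fintype.card K = q ^ 2) :
    (#{v : Fin 3 → K | ∑ i, v i ^ (q + 1) = 0} : ℤ) = q ^ 5 - q ^ 3 + q ^ 2 := by
  have hzero : #{v : Fin 0 → K | ∑ i, v i ^ (q + 1) = 0} = 1 := by simp
  rw [card_filter_sum_pow_succ_eq_zero_succ hK 2, card_filter_sum_pow_succ_eq_zero_succ hK 1,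
    card_filter_sum_pow_succ_eq_zero_succ hK 0, hzero]
  push_cast
  ring

theorem card_subtype_sum_three_rep_pow_succ_eq_zero (hK : Fintype.card K = q ^ 2) :
    Nat.card {P : ℙ K (Fin 3 → K) // ∑ i, P.rep i ^ (q + 1) = 0} = q ^ 3 + 1 := by
  classical
  have hC (a : Kˣ) (v : Fin 3 → K) :
      ∑ i, (a • v) i ^ (q + 1) = 0 ↔ ∑ i, v i ^ (q + 1) = 0 := by
    simp only [Pi.smul_apply, Units.smul_def, smul_eq_mul, mul_pow, ← mul_sum, mul_eq_zero,
      pow_eq_zero_iff', Units.ne_zero, false_and, false_or]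
  have hcount := card_subtype_eq_card_subtype_rep_mul_add_one
    (fun v : Fin 3 → K => ∑ i, v i ^ (q + 1) = 0) hC (by simp)
  rw [Nat.card_eq_fintype_card (α := {v // _}), Fintype.card_subtype] at hcount
  have hq : 1 < q ^ 2 := hK ▸ Fintype.one_lt_card
  have hunits : (Nat.card Kˣ : ℤ) = q ^ 2 - 1 := by
    rw [Nat.card_eq_fintype_card, Fintype.card_units, hK, Nat.cast_sub hq.le, Nat.cast_pow,
      Nat.cast_one]
  apply Nat.cast_injective (R := ℤ)
  refine mul_right_cancel₀ (sub_ne_zero.mpr (by exact_mod_cast hq.ne') : (q : ℤ) ^ 2 - 1 ≠ 0) ?_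
  have hcount' := congrArg (Nat.cast (R := ℤ)) hcount
  push_cast at hcount' ⊢
  rw [card_filter_sum_three_pow_succ_eq_zero hK, hunits] at hcount'
  linear_combination (-1 : ℤ) * hcount'

end FiniteField

theorem one_add_sq_add_two_mul_mul_sub_one_div_two {q : ℕ} (hq : 1 ≤ q) :
    1 + q ^ 2 + 2 * q * (q * (q - 1) / 2) = q ^ 3 + 1 := by
  rw [mul_comm 2 q, mul_assoc, Nat.mul_div_cancel' (Nat.even_mul_pred_self q).two_dvd]
  obtain ⟨r, rfl⟩ := Nat.exists_eq_add_of_le hq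
  simp only [Nat.add_sub_cancel_left]
  ring

theorem card_hermitian_curve_general (K : Type*) [Field K] [Fintype K] (q : ℕ)
    (hK : Fintype.card K = q ^ 2) :
    Nat.card {P : ℙ K (Fin 3 → K) //
        (P.rep 0) ^ (q + 1) + (P.rep 1) ^ (q + 1) + (P.rep 2) ^ (q + 1) = 0}
      = 1 + q ^ 2 + 2 * q * (q * (q - 1) / 2) ∧
    Nat.card {P : ℙ K (Fin 3 → K) //
        (P.rep 0) ^ (q + 1) + (P.rep 1) ^ (q + 1) + (P.rep 2) ^ (q + 1) = 0}
      = q ^ 3 + 1 := by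
  have hcard := card_subtype_sum_three_rep_pow_succ_eq_zero hK
  simp only [Fin.sum_univ_three] at hcard
  have hq : 1 ≤ q := Nat.pos_of_ne_zero fun h => by
    simpa [h] using (Fintype.one_lt_card (α := K)).trans_eq hK
  exact ⟨hcard.trans (one_add_sq_add_two_mul_mul_sub_one_div_two hq).symm, hcard⟩

/-- The Hermitian curve `x^{q+1} + y^{q+1} + z^{q+1} = 0` over `𝔽_{q²}` has exactly
`1 + q² + 2q·g` rational points, where `g = q(q-1)/2` is its genus; that is, its number
of `𝔽_{q²}`-points equals `q³ + 1`. -/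
theorem card_hermitian_curve (K : Type*) [Field K] [Fintype K] (q : ℕ)
    (hq : IsPrimePow q) (hK : Fintype.card K = q ^ 2) :
    Nat.card {P : ℙ K (Fin 3 → K) //
        (P.rep 0) ^ (q + 1) + (P.rep 1) ^ (q + 1) + (P.rep 2) ^ (q + 1) = 0}
      = 1 + q ^ 2 + 2 * q * (q * (q - 1) / 2) ∧
    Nat.card {P : ℙ K (Fin 3 → K) //
        (P.rep 0) ^ (q + 1) + (P.rep 1) ^ (q + 1) + (P.rep 2) ^ (q + 1) = 0}
      = q ^ 3 + 1 :=
  card_hermitian_curve_general K q hK
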